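/- arXiv:2112.01139 — 4 statements merged into one kernel-verified Lean document; each statement's English description precedes it below -/
import Mathlib

section
/- The four two-qubit product vectors |φ₀⟩=|0⟩⊗|0⟩, |φ₁⟩=|0⟩⊗|1⟩, |φ₊⟩=|+⟩⊗|+⟩, |φ₋⟩=|−⟩⊗|−⟩ (where |±⟩=(|0⟩±|1⟩)/√2) form a basis of ℂ²⊗ℂ², and their unique reciprocal vectors (vectors |φ̃ᵢ⟩ satisfying ⟨φᵢ|φ̃ⱼ⟩=δᵢⱼ) are |φ̃₀⟩=√2|Φ₋⟩, |φ̃₁⟩=√2|Ψ₋⟩, |φ̃₊⟩=√2|1⟩⊗|+⟩, |φ̃₋⟩=−√2|1⟩⊗|−⟩, where |Φ₋⟩=(|00⟩−|11⟩)/√2 and |Ψ₋⟩=(|01⟩−|10⟩)/√2. -/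
open Matrix Complex
open scoped Matrix Kronecker ComplexOrder

noncomputable section

abbrev Q2 := Fin 2 → ℂ
abbrev V4 := Fin 2 × Fin 2 → ℂ
abbrev Op2 := Matrix (Fin 2) (Fin 2) ℂ
abbrev Op4 := Matrix (Fin 2 × Fin 2) (Fin 2 × Fin 2) ℂ

def ket0 : Q2 := ![1, 0]
def ket1 : Q2 := ![0, 1]
def ketP : Q2 := (Real.sqrt 2 : ℂ)⁻¹ • (ket0 + ket1)
def ketM : Q2 := (Real.sqrt 2 : ℂ)⁻¹ • (ket0 - ket1)

/-- tensor product of two qubit vectors -/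
def tens (a b : Q2) : V4 := fun p => a p.1 * b p.2

/-- rank-one projector |v⟩⟨v| on one qubit -/
def proj2 (v : Q2) : Op2 := Matrix.of fun i j => v i * star (v j)

/-- rank-one operator |v⟩⟨v| on two qubits -/
def proj (v : V4) : Op4 := Matrix.of fun i j => v i * star (v j)

/-- inner product ⟨u|v⟩ -/
def ip4 (u v : V4) : ℂ := star u ⬝ᵥ v

/-- expectation value ⟨u|M|u⟩ -/
def expVal (u : V4) (M : Op4) : ℂ := star u ⬝ᵥ (M *ᵥ u)

-- Bell states
def PhiP : V4 := (Real.sqrt 2 : ℂ)⁻¹ • (tens ket0 ket0 + tens ket1 ket1)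
def PhiM : V4 := (Real.sqrt 2 : ℂ)⁻¹ • (tens ket0 ket0 - tens ket1 ket1)
def PsiP : V4 := (Real.sqrt 2 : ℂ)⁻¹ • (tens ket0 ket1 + tens ket1 ket0)
def PsiM : V4 := (Real.sqrt 2 : ℂ)⁻¹ • (tens ket0 ket1 - tens ket1 ket0)

-- Example 1 states
def φ0 : V4 := tens ket0 ket0
def φ1 : V4 := tens ket0 ket1
def φP : V4 := tens ketP ketP
def φM : V4 := tens ketM ketM

-- Example 1 reciprocal vectors
def φt0 : V4 := (Real.sqrt 2 : ℂ) • PhiM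
def φt1 : V4 := (Real.sqrt 2 : ℂ) • PsiM
def φtP : V4 := (Real.sqrt 2 : ℂ) • tens ket1 ketP
def φtM : V4 := -((Real.sqrt 2 : ℂ) • tens ket1 ketM)

-- Example 2 states
def ψ0 : V4 := tens ket0 ket0
def ψ1 : V4 := tens ket0 ket1
def ψP : V4 := tens ketP ketP
def ψM : V4 := tens ketP ketM

-- Example 2 reciprocal vectors
def ψt0 : V4 := (Real.sqrt 2 : ℂ) • tens ketM ket0
def ψt1 : V4 := (Real.sqrt 2 : ℂ) • tens ketM ket1
def ψtP : V4 := (Real.sqrt 2 : ℂ) • tens ket1 ketP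
def ψtM : V4 := (Real.sqrt 2 : ℂ) • tens ket1 ketM

/-- prior probabilities η₀=η₁=γ/(2(1+γ)), η₊=η₋=1/(2(1+γ)) -/
def η (γ : ℝ) : Fin 4 → ℝ :=
  ![γ / (2 * (1 + γ)), γ / (2 * (1 + γ)), 1 / (2 * (1 + γ)), 1 / (2 * (1 + γ))]

/-!
Biorthogonality of the two families is a finite computation once every vector is written in the
computational basis, where the factors `√2` cancel: `φ₊ = (1,1,1,1)/2`, `φ₋ = (1,-1,-1,1)/2`,
`φ̃₀ = (1,0,0,-1)`, `φ̃₁ = (0,1,-1,0)`, `φ̃₊ = (0,0,1,1)`, `φ̃₋ = (0,0,-1,1)`. A family admitting a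
biorthogonal family is linearly independent, so four such vectors span `ℂ⁴`; and a vector orthogonal
to a spanning family vanishes, which makes the reciprocal family unique.
-/

section Biorthogonal

variable {ι n R : Type*} [Fintype ι] [Fintype n]

theorem linearIndependent_of_star_dotProduct_eq_ite [CommRing R] [StarRing R] [DecidableEq ι]
    {v w : ι → n → R} (h : ∀ i j, star (v i) ⬝ᵥ w j = if i = j then 1 else 0) :
    LinearIndependent R v := by
  rw [Fintype.linearIndependent_iff]
  intro c hc j
  have hdual : ∀ i, star (w j) ⬝ᵥ v i = if i = j then 1 else 0 := fun i => by
    rw [← star_star (v i), star_dotProduct_star, h]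
    split_ifs <;> simp
  simpa [dotProduct_sum, hdual] using congrArg (star (w j) ⬝ᵥ ·) hc

theorem eq_of_forall_star_dotProduct_eq [CommRing R] [PartialOrder R] [StarRing R]
    [StarOrderedRing R] [NoZeroDivisors R] {v : ι → n → R}
    (hv : Submodule.span R (Set.range v) = ⊤) {x y : n → R}
    (h : ∀ i, star (v i) ⬝ᵥ x = star (v i) ⬝ᵥ y) : x = y := by
  obtain ⟨c, hc⟩ := (Submodule.mem_span_range_iff_exists_fun R).mp (hv ▸ Submodule.mem_top :
    x - y ∈ Submodule.span R (Set.range v))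
  rw [← sub_eq_zero, ← dotProduct_star_self_eq_zero]
  nth_rw 1 [← hc]
  simp [star_sum, sum_dotProduct, dotProduct_sub, h]

theorem eq_of_forall_star_dotProduct_eq_ite [CommRing R] [PartialOrder R] [StarRing R]
    [StarOrderedRing R] [NoZeroDivisors R] [DecidableEq ι] {v w w' : ι → n → R}
    (hv : Submodule.span R (Set.range v) = ⊤)
    (hw : ∀ i j, star (v i) ⬝ᵥ w j = if i = j then 1 else 0)
    (hw' : ∀ i j, star (v i) ⬝ᵥ w' j = if i = j then 1 else 0) : w' = w :=
  funext fun j => eq_of_forall_star_dotProduct_eq hv fun i => (hw' i j).trans (hw i j).symm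

end Biorthogonal

def ket4 (a b c d : ℂ) : V4 := fun p => ![![a, b], ![c, d]] p.1 p.2

lemma ip4_ket4 (a b c d a' b' c' d' : ℂ) :
    ip4 (ket4 a b c d) (ket4 a' b' c' d') =
      star a * a' + star b * b' + star c * c' + star d * d' := by
  simp [ip4, ket4, dotProduct, Fintype.sum_prod_type]
  ring

lemma sqrt_two_inv_mul_self : (Real.sqrt 2 : ℂ)⁻¹ * (Real.sqrt 2 : ℂ)⁻¹ = 2⁻¹ := by
  rw [← mul_inv, ← Complex.ofReal_mul, Real.mul_self_sqrt zero_le_two]; norm_num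

lemma φ0_eq : φ0 = ket4 1 0 0 0 := by
  funext ⟨i, j⟩; fin_cases i <;> fin_cases j <;>
    simp [φ0, ket4, tens, ket0]

lemma φ1_eq : φ1 = ket4 0 1 0 0 := by
  funext ⟨i, j⟩; fin_cases i <;> fin_cases j <;>
    simp [φ1, ket4, tens, ket0, ket1]

lemma φP_eq : φP = ket4 2⁻¹ 2⁻¹ 2⁻¹ 2⁻¹ := by
  funext ⟨i, j⟩; fin_cases i <;> fin_cases j <;>
    simp [φP, ket4, tens, ketP, ket0, ket1, sqrt_two_inv_mul_self]

lemma φM_eq : φM = ket4 2⁻¹ (-2⁻¹) (-2⁻¹) 2⁻¹ := by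
  funext ⟨i, j⟩; fin_cases i <;> fin_cases j <;>
    simp [φM, ket4, tens, ketM, ket0, ket1, sqrt_two_inv_mul_self]

lemma φt0_eq : φt0 = ket4 1 0 0 (-1) := by
  funext ⟨i, j⟩; fin_cases i <;> fin_cases j <;>
    simp [φt0, PhiM, ket4, tens, ket0, ket1]

lemma φt1_eq : φt1 = ket4 0 1 (-1) 0 := by
  funext ⟨i, j⟩; fin_cases i <;> fin_cases j <;>
    simp [φt1, PsiM, ket4, tens, ket0, ket1]

lemma φtP_eq : φtP = ket4 0 0 1 1 := by
  funext ⟨i, j⟩; fin_cases i <;> fin_cases j <;>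
    simp [φtP, ketP, ket4, tens, ket0, ket1]

lemma φtM_eq : φtM = ket4 0 0 (-1) 1 := by
  funext ⟨i, j⟩; fin_cases i <;> fin_cases j <;>
    simp [φtM, ketM, ket4, tens, ket0, ket1]

lemma ip4_φ_φt (i j : Fin 4) :
    ip4 (![φ0, φ1, φP, φM] i) (![φt0, φt1, φtP, φtM] j) = if i = j then 1 else 0 := by
  fin_cases i <;> fin_cases j <;>
    simp [φ0_eq, φ1_eq, φP_eq, φM_eq, φt0_eq, φt1_eq, φtP_eq, φtM_eq, ip4_ket4] <;> norm_num

/-- the four product vectors form a basis of ℂ²⊗ℂ² and the listed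
vectors are their unique reciprocal vectors. -/
theorem stmt_0 :
    LinearIndependent ℂ ![φ0, φ1, φP, φM] ∧
    Submodule.span ℂ (Set.range ![φ0, φ1, φP, φM]) = ⊤ ∧
    (∀ i j : Fin 4,
      ip4 (![φ0, φ1, φP, φM] i) (![φt0, φt1, φtP, φtM] j) = if i = j then 1 else 0) ∧
    (∀ ψ : Fin 4 → V4,
      (∀ i j : Fin 4, ip4 (![φ0, φ1, φP, φM] i) (ψ j) = if i = j then 1 else 0) →
        ψ = ![φt0, φt1, φtP, φtM]) := by
  have hli := linearIndependent_of_star_dotProduct_eq_ite ip4_φ_φt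
  have hspan := hli.span_eq_top_of_card_eq_finrank (by simp)
  exact ⟨hli, hspan, ip4_φ_φt,
    fun ψ hψ => eq_of_forall_star_dotProduct_eq_ite hspan ip4_φ_φt hψ⟩
end
end

section
/- On ℂ²⊗ℂ², the operators M₀=|−⟩⟨−|⊗|0⟩⟨0|, M₁=|−⟩⟨−|⊗|1⟩⟨1|, M₊=M₋=0, M_?=|+⟩⟨+|⊗𝟙 form a POVM satisfying the error-free condition ⟨φⱼ|Mᵢ|φⱼ⟩=0 for all i≠j in {0,1,+,−}, where |φ₀⟩=|00⟩, |φ₁⟩=|01⟩, |φ₊⟩=|+⟩⊗|+⟩, |φ₋⟩=|+⟩⊗|−⟩, and its success probability for priors η₀=η₁=γ/(2(1+γ)), η₊=η₋=1/(2(1+γ)) equals γ/(2(1+γ)). -/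
open Matrix Complex
open scoped Matrix Kronecker ComplexOrder

noncomputable section

/-! Every operator involved is a Kronecker product of single-qubit operators and every state a
product state, so each expectation value factors into squared moduli of single-qubit overlaps.
The error-free conditions then reduce to `⟨0|1⟩ = ⟨1|0⟩ = ⟨−|+⟩ = 0`, completeness to
`|0⟩⟨0| + |1⟩⟨1| = |+⟩⟨+| + |−⟩⟨−| = 𝟙`, and the success probability to `|⟨−|0⟩|² = 1/2`. -/

lemma proj2_eq_vecMulVec (v : Q2) : proj2 v = vecMulVec v (star v) := rfl

lemma posSemidef_proj2 (v : Q2) : (proj2 v).PosSemidef := by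
  rw [proj2_eq_vecMulVec]
  exact posSemidef_vecMulVec_self_star v

lemma dotProduct_mulVec_proj2 (a c : Q2) :
    star c ⬝ᵥ (proj2 a *ᵥ c) = (normSq (star a ⬝ᵥ c) : ℂ) := by
  rw [proj2_eq_vecMulVec, vecMulVec_mulVec, op_smul_eq_smul, dotProduct_smul, smul_eq_mul,
    star_dotProduct c a, Complex.star_def, mul_conj]

lemma expVal_tens_kronecker (A B : Op2) (c d : Q2) :
    expVal (tens c d) (A ⊗ₖ B) = (star c ⬝ᵥ (A *ᵥ c)) * (star d ⬝ᵥ (B *ᵥ d)) := by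
  simp only [expVal, tens, dotProduct, mulVec, Fintype.sum_prod_type, kroneckerMap_apply,
    Pi.star_apply, star_mul', Fin.sum_univ_two]
  ring

lemma expVal_tens_kronecker_proj2 (a b c d : Q2) :
    expVal (tens c d) (proj2 a ⊗ₖ proj2 b) =
      (normSq (star a ⬝ᵥ c) * normSq (star b ⬝ᵥ d) : ℝ) := by
  rw [expVal_tens_kronecker, dotProduct_mulVec_proj2, dotProduct_mulVec_proj2, ofReal_mul]

lemma expVal_zero (u : V4) : expVal u 0 = 0 := by
  simp [expVal]

lemma ofReal_sqrt_two_inv_mul_self : (Real.sqrt 2 : ℂ)⁻¹ * (Real.sqrt 2 : ℂ)⁻¹ = 1 / 2 := by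
  rw [← mul_inv, ← ofReal_mul, Real.mul_self_sqrt zero_le_two]
  norm_num

lemma dotProduct_ket0_ket1 : star ket0 ⬝ᵥ ket1 = 0 := by
  simp [ket0, ket1, dotProduct]

lemma dotProduct_ket1_ket0 : star ket1 ⬝ᵥ ket0 = 0 := by
  simp [ket0, ket1, dotProduct]

lemma dotProduct_ketM_ketP : star ketM ⬝ᵥ ketP = 0 := by
  simp [ket0, ket1, ketP, ketM, dotProduct]

lemma normSq_dotProduct_ket0_ket0 : normSq (star ket0 ⬝ᵥ ket0) = 1 := by
  simp [ket0, dotProduct]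

lemma normSq_dotProduct_ket1_ket1 : normSq (star ket1 ⬝ᵥ ket1) = 1 := by
  simp [ket1, dotProduct]

lemma normSq_dotProduct_ketM_ket0 : normSq (star ketM ⬝ᵥ ket0) = 1 / 2 := by
  simp [ket0, ket1, ketM, dotProduct]

lemma proj2_ket0_add_proj2_ket1 : proj2 ket0 + proj2 ket1 = 1 := by
  ext i j
  fin_cases i <;> fin_cases j <;> simp [proj2, ket0, ket1]

lemma proj2_ketP_add_proj2_ketM : proj2 ketP + proj2 ketM = 1 := by
  ext i j
  fin_cases i <;> fin_cases j <;>
    norm_num [proj2, ket0, ket1, ketP, ketM, ofReal_sqrt_two_inv_mul_self]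

theorem stmt_10_general (γ : ℝ) :
    (proj2 ketM ⊗ₖ proj2 ket0).PosSemidef ∧
    (proj2 ketM ⊗ₖ proj2 ket1).PosSemidef ∧
    (proj2 ketP ⊗ₖ (1 : Op2)).PosSemidef ∧
    proj2 ketM ⊗ₖ proj2 ket0 + proj2 ketM ⊗ₖ proj2 ket1 + 0 + 0
      + proj2 ketP ⊗ₖ (1 : Op2) = 1 ∧
    (∀ i j : Fin 4, i ≠ j →
      expVal (![ψ0, ψ1, ψP, ψM] j)
        (![proj2 ketM ⊗ₖ proj2 ket0, proj2 ketM ⊗ₖ proj2 ket1, 0, 0] i) = 0) ∧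
    (∑ i : Fin 4, ((η γ i : ℝ) : ℂ) *
        expVal (![ψ0, ψ1, ψP, ψM] i)
          (![proj2 ketM ⊗ₖ proj2 ket0, proj2 ketM ⊗ₖ proj2 ket1, 0, 0] i))
      = ((γ / (2 * (1 + γ)) : ℝ) : ℂ) := by
  refine ⟨(posSemidef_proj2 _).kronecker (posSemidef_proj2 _),
    (posSemidef_proj2 _).kronecker (posSemidef_proj2 _), (posSemidef_proj2 _).kronecker .one,
    ?_, ?_, ?_⟩
  · rw [add_zero, add_zero, ← kronecker_add, proj2_ket0_add_proj2_ket1, ← add_kronecker,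
      add_comm, proj2_ketP_add_proj2_ketM, one_kronecker_one]
  · intro i j hij
    fin_cases i <;> fin_cases j <;>
      simp only [Fin.zero_eta, Fin.mk_one, Fin.reduceFinMk, cons_val, ψ0, ψ1, ψP, ψM,
        expVal_tens_kronecker_proj2, expVal_zero, dotProduct_ket0_ket1, dotProduct_ket1_ket0,
        dotProduct_ketM_ketP, map_zero, zero_mul, mul_zero, ofReal_zero]
    all_goals exact absurd rfl hij
  · simp only [Fin.sum_univ_four, cons_val, η, ψ0, ψ1, expVal_tens_kronecker_proj2, expVal_zero,
      normSq_dotProduct_ketM_ket0, normSq_dotProduct_ket0_ket0,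
      normSq_dotProduct_ket1_ket1, mul_zero, add_zero]
    push_cast
    ring

/-- M₀=|−⟩⟨−|⊗|0⟩⟨0|, M₁=|−⟩⟨−|⊗|1⟩⟨1|, M₊=M₋=0, M_?=|+⟩⟨+|⊗𝟙 is an
unambiguous POVM for Example 2 with success probability γ/(2(1+γ)). -/
theorem stmt_10 (γ : ℝ) (hγ : 2 ≤ γ) :
    (proj2 ketM ⊗ₖ proj2 ket0).PosSemidef ∧
    (proj2 ketM ⊗ₖ proj2 ket1).PosSemidef ∧
    (proj2 ketP ⊗ₖ (1 : Op2)).PosSemidef ∧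
    proj2 ketM ⊗ₖ proj2 ket0 + proj2 ketM ⊗ₖ proj2 ket1 + 0 + 0
      + proj2 ketP ⊗ₖ (1 : Op2) = 1 ∧
    (∀ i j : Fin 4, i ≠ j →
      expVal (![ψ0, ψ1, ψP, ψM] j)
        (![proj2 ketM ⊗ₖ proj2 ket0, proj2 ketM ⊗ₖ proj2 ket1, 0, 0] i) = 0) ∧
    (∑ i : Fin 4, ((η γ i : ℝ) : ℂ) *
        expVal (![ψ0, ψ1, ψP, ψM] i)
          (![proj2 ketM ⊗ₖ proj2 ket0, proj2 ketM ⊗ₖ proj2 ket1, 0, 0] i))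
      = ((γ / (2 * (1 + γ)) : ℝ) : ℂ) :=
  stmt_10_general γ
end
end

section
/- With the POVM of the previous statement and priors η₀=η₁=γ/(2(1+γ)), η₊=η₋=1/(2(1+γ)) (γ≥2), the success probability η₀⟨φ₀|M₍₀,?₎|φ₀⟩ + η₁⟨φ₁|M₍₁,?₎|φ₁⟩ + η₊⟨φ₊|M₍?,₊₎|φ₊⟩ + η₋⟨φ₋|M₍?,₋₎|φ₋⟩ equals (1/2)(1 + √(1+γ²)/(1+γ)). -/
open Matrix Complex
open scoped Matrix Kronecker ComplexOrder

noncomputable section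

/-- |ν₊⟩ = √(1/2 − γ/(2√(1+γ²)))|0⟩ + √(1/2 + γ/(2√(1+γ²)))|1⟩ -/
def νp (γ : ℝ) : Q2 :=
  ![((Real.sqrt (1/2 - γ / (2 * Real.sqrt (1 + γ^2))) : ℝ) : ℂ),
    ((Real.sqrt (1/2 + γ / (2 * Real.sqrt (1 + γ^2))) : ℝ) : ℂ)]

/-- |ν₋⟩ = √(1/2 + γ/(2√(1+γ²)))|0⟩ − √(1/2 − γ/(2√(1+γ²)))|1⟩ -/
def νm (γ : ℝ) : Q2 :=
  ![((Real.sqrt (1/2 + γ / (2 * Real.sqrt (1 + γ^2))) : ℝ) : ℂ),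
    -((Real.sqrt (1/2 - γ / (2 * Real.sqrt (1 + γ^2))) : ℝ) : ℂ)]

/-!
Each measurement operator is a product |u⟩⟨u| ⊗ |v⟩⟨v| and each state a product |a⟩ ⊗ |b⟩, so every
term of the success probability factors as |⟨a|u⟩|² |⟨b|v⟩|². The second factor is always 1, and the
first is |⟨0|ν₋⟩|² = 1/2 + x for |00⟩, |01⟩ and |⟨+|ν₊⟩|² = 1/2 + 1/(2√(1+γ²)) for |++⟩, |+−⟩,
where x = γ/(2√(1+γ²)); the latter because the amplitudes √(1/2 ± x) of ν₊ multiply to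
√(1/4 - x²) = 1/(2√(1+γ²)).
Weighting by the priors then gives 1/2 + (γ² + 1)/(2(1+γ)√(1+γ²)).
-/

lemma expVal_tens_kronecker_proj2_re (a b u v : Q2) :
    (expVal (tens a b) (proj2 u ⊗ₖ proj2 v)).re
      = Complex.normSq (star a ⬝ᵥ u) * Complex.normSq (star b ⬝ᵥ v) := by
  have h : expVal (tens a b) (proj2 u ⊗ₖ proj2 v)
      = (star a ⬝ᵥ u) * (star u ⬝ᵥ a) * ((star b ⬝ᵥ v) * (star v ⬝ᵥ b)) := by
    simp only [expVal, tens, proj2, dotProduct, Matrix.mulVec,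
      Fintype.sum_prod_type, Fin.sum_univ_two, Matrix.kroneckerMap_apply,
      Matrix.of_apply, Pi.star_apply, star_mul']
    ring
  rw [h, star_dotProduct (v := u), star_dotProduct (v := v), Complex.star_def,
    Complex.mul_conj, Complex.mul_conj, ← Complex.ofReal_mul, Complex.ofReal_re]

def rket (c d : ℝ) : Q2 := ![(c : ℂ), (d : ℂ)]

lemma normSq_star_rket_dotProduct_rket (a b c d : ℝ) :
    Complex.normSq (star (rket a b) ⬝ᵥ rket c d) = (a * c + b * d) ^ 2 := by
  have h : star (rket a b) ⬝ᵥ rket c d = ((a * c + b * d : ℝ) : ℂ) := by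
    simp [rket, dotProduct, Fin.sum_univ_two]
  rw [h, Complex.normSq_ofReal, sq]

lemma ket0_eq_rket : ket0 = rket 1 0 := by
  ext i; fin_cases i <;> simp [ket0, rket]

lemma ket1_eq_rket : ket1 = rket 0 1 := by
  ext i; fin_cases i <;> simp [ket1, rket]

lemma ketP_eq_rket : ketP = rket (√2)⁻¹ (√2)⁻¹ := by
  ext i; fin_cases i <;> simp [ketP, ket0, ket1, rket]

lemma ketM_eq_rket : ketM = rket (√2)⁻¹ (-(√2)⁻¹) := by
  ext i; fin_cases i <;> simp [ketM, ket0, ket1, rket]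

lemma normSq_star_ket0_dotProduct_self : Complex.normSq (star ket0 ⬝ᵥ ket0) = 1 := by
  rw [ket0_eq_rket, normSq_star_rket_dotProduct_rket]
  norm_num

lemma normSq_star_ket1_dotProduct_self : Complex.normSq (star ket1 ⬝ᵥ ket1) = 1 := by
  rw [ket1_eq_rket, normSq_star_rket_dotProduct_rket]
  norm_num

lemma inv_sqrt_two_sq : (√2)⁻¹ ^ 2 = 1 / 2 := by
  rw [inv_pow, Real.sq_sqrt zero_le_two, one_div]

lemma normSq_star_ketP_dotProduct_self : Complex.normSq (star ketP ⬝ᵥ ketP) = 1 := by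
  rw [ketP_eq_rket, normSq_star_rket_dotProduct_rket]
  linear_combination (4 * (√2)⁻¹ ^ 2 + 2) * inv_sqrt_two_sq

lemma normSq_star_ketM_dotProduct_self : Complex.normSq (star ketM ⬝ᵥ ketM) = 1 := by
  rw [ketM_eq_rket, normSq_star_rket_dotProduct_rket]
  linear_combination (4 * (√2)⁻¹ ^ 2 + 2) * inv_sqrt_two_sq

section Amplitudes

variable (γ : ℝ)

lemma abs_div_two_sqrt_one_add_sq_le_half : |γ / (2 * √(1 + γ ^ 2))| ≤ 1 / 2 := by
  have hs : 0 < √(1 + γ ^ 2) := Real.sqrt_pos.mpr (by positivity)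
  have hγs : |γ| ≤ √(1 + γ ^ 2) := Real.abs_le_sqrt (by linarith)
  rw [abs_div, abs_of_pos (mul_pos two_pos hs), div_le_iff₀ (mul_pos two_pos hs)]
  linarith

lemma sqrt_half_add_mul_sqrt_half_sub :
    √(1 / 2 + γ / (2 * √(1 + γ ^ 2))) * √(1 / 2 - γ / (2 * √(1 + γ ^ 2)))
      = 1 / (2 * √(1 + γ ^ 2)) := by
  have hs : 0 < √(1 + γ ^ 2) := Real.sqrt_pos.mpr (by positivity)
  have hs2 : √(1 + γ ^ 2) ^ 2 = 1 + γ ^ 2 := Real.sq_sqrt (by positivity)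
  have hx := abs_le.mp (abs_div_two_sqrt_one_add_sq_le_half γ)
  rw [← Real.sqrt_mul (by linarith), ← Real.sqrt_sq (by positivity : 0 ≤ 1 / (2 * √(1 + γ ^ 2)))]
  congr 1
  field_simp
  linear_combination hs2

lemma νm_eq_rket :
    νm γ = rket √(1 / 2 + γ / (2 * √(1 + γ ^ 2))) (-√(1 / 2 - γ / (2 * √(1 + γ ^ 2)))) := by
  ext i; fin_cases i <;> simp [νm, rket]

lemma νp_eq_rket :
    νp γ = rket √(1 / 2 - γ / (2 * √(1 + γ ^ 2))) √(1 / 2 + γ / (2 * √(1 + γ ^ 2))) := rfl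

lemma normSq_star_ket0_dotProduct_νm :
    Complex.normSq (star ket0 ⬝ᵥ νm γ) = 1 / 2 + γ / (2 * √(1 + γ ^ 2)) := by
  have hx := abs_le.mp (abs_div_two_sqrt_one_add_sq_le_half γ)
  rw [ket0_eq_rket, νm_eq_rket, normSq_star_rket_dotProduct_rket]
  linear_combination Real.sq_sqrt (by linarith : 0 ≤ 1 / 2 + γ / (2 * √(1 + γ ^ 2)))

lemma normSq_star_ketP_dotProduct_νp :
    Complex.normSq (star ketP ⬝ᵥ νp γ) = 1 / 2 + 1 / (2 * √(1 + γ ^ 2)) := by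
  have hx := abs_le.mp (abs_div_two_sqrt_one_add_sq_le_half γ)
  have hpm := sqrt_half_add_mul_sqrt_half_sub γ
  rw [ketP_eq_rket, νp_eq_rket, normSq_star_rket_dotProduct_rket]
  set x := γ / (2 * √(1 + γ ^ 2))
  have hp := Real.sq_sqrt (by linarith : 0 ≤ 1 / 2 + x)
  have hm := Real.sq_sqrt (by linarith : 0 ≤ 1 / 2 - x)
  linear_combination (√(1 / 2 - x) + √(1 / 2 + x)) ^ 2 * inv_sqrt_two_sq
    + 1 / 2 * hp + 1 / 2 * hm + hpm

end Amplitudes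

/-- the success probability of the PI-assisted LOCC POVM of
Statement 13 equals (1/2)(1 + √(1+γ²)/(1+γ)). -/
theorem stmt_14 (γ : ℝ) (hγ : 2 ≤ γ) :
    (γ / (2 * (1 + γ))) * (expVal ψ0 (proj2 (νm γ) ⊗ₖ proj2 ket0)).re
      + (γ / (2 * (1 + γ))) * (expVal ψ1 (proj2 (νm γ) ⊗ₖ proj2 ket1)).re
      + (1 / (2 * (1 + γ))) * (expVal ψP (proj2 (νp γ) ⊗ₖ proj2 ketP)).re
      + (1 / (2 * (1 + γ))) * (expVal ψM (proj2 (νp γ) ⊗ₖ proj2 ketM)).re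
      = (1 / 2) * (1 + Real.sqrt (1 + γ^2) / (1 + γ)) := by
  simp only [ψ0, ψ1, ψP, ψM, expVal_tens_kronecker_proj2_re, normSq_star_ket0_dotProduct_νm,
    normSq_star_ketP_dotProduct_νp, normSq_star_ket0_dotProduct_self,
    normSq_star_ket1_dotProduct_self, normSq_star_ketP_dotProduct_self,
    normSq_star_ketM_dotProduct_self, mul_one]
  have hs : 0 < √(1 + γ ^ 2) := Real.sqrt_pos.mpr (by positivity)
  have hs2 : √(1 + γ ^ 2) ^ 2 = 1 + γ ^ 2 := Real.sq_sqrt (by positivity)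
  have h1γ : 1 + γ ≠ 0 := by linarith
  field_simp
  linear_combination (-2) * hs2
end
end

section
/- For the states |φ₀⟩=|00⟩, |φ₁⟩=|01⟩, |φ₊⟩=|+⟩⊗|+⟩, |φ₋⟩=|+⟩⊗|−⟩, and any pair (ω₀,ω₁)∈{0,1}×{+,−}, there is no nonzero product vector |v⟩=|a⟩⊗|b⟩ in ℂ²⊗ℂ² with ⟨φ_{ω₀}|v⟩≠0, ⟨φ_{ω₁}|v⟩≠0, and ⟨φⱼ|v⟩=0 for both j ∉ {ω₀,ω₁}. -/
open Matrix Complex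
open scoped Matrix Kronecker ComplexOrder

noncomputable section

/- Each state is |0⟩ or |+⟩ on the first qubit, so overlapping a state of a pair forces the
first factor `a` to overlap that qubit, and orthogonality to the other state of the pair then falls
on `b` alone. Hence `b` is orthogonal to a computational and to a Hadamard basis vector, which
span ℂ², so `b = 0`. -/

lemma ip4_tens (x y a b : Q2) :
    ip4 (tens x y) (tens a b) = (star x ⬝ᵥ a) * (star y ⬝ᵥ b) := by
  simp only [ip4, tens, dotProduct, Fintype.sum_prod_type, Fin.sum_univ_two, Pi.star_apply,
    star_mul']
  ring

lemma star_ket_dotProduct (i : Fin 2) (b : Q2) : star (![ket0, ket1] i) ⬝ᵥ b = b i := by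
  fin_cases i <;> simp [ket0, ket1, dotProduct, Fin.sum_univ_two]

lemma star_ketP_dotProduct (b : Q2) : star ketP ⬝ᵥ b = (Real.sqrt 2 : ℂ)⁻¹ * (b 0 + b 1) := by
  simp [ketP, ket0, ket1, dotProduct, Fin.sum_univ_two, ← Complex.ofReal_inv]
  ring

lemma star_ketM_dotProduct (b : Q2) : star ketM ⬝ᵥ b = (Real.sqrt 2 : ℂ)⁻¹ * (b 0 - b 1) := by
  simp [ketM, ket0, ket1, dotProduct, Fin.sum_univ_two, ← Complex.ofReal_inv]
  ring

lemma eq_zero_of_apply_eq_zero_of_star_hadamard_dotProduct_eq_zero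
    {i j : Fin 2} {b : Q2} (hi : b i = 0) (hj : star (![ketP, ketM] j) ⬝ᵥ b = 0) : b = 0 := by
  have hs : (Real.sqrt 2 : ℂ)⁻¹ ≠ 0 := by simp
  funext k
  fin_cases i <;> fin_cases j <;>
    simp only [Fin.zero_eta, Fin.mk_one, Matrix.cons_val_zero, Matrix.cons_val_one,
      star_ketP_dotProduct, star_ketM_dotProduct, mul_eq_zero, hs, false_or] at hi hj <;>
    fin_cases k <;> simp only [Fin.zero_eta, Fin.mk_one, Pi.zero_apply] <;> grind

lemma comp_states_eq_tens (i : Fin 2) : ![ψ0, ψ1] i = tens ket0 (![ket0, ket1] i) := by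
  fin_cases i <;> rfl

lemma hadamard_states_eq_tens (j : Fin 2) : ![ψP, ψM] j = tens ketP (![ketP, ketM] j) := by
  fin_cases j <;> rfl

/-- for every (ω₀,ω₁)∈{0,1}×{+,−} there is no nonzero product vector
that overlaps both φ_{ω₀}, φ_{ω₁} and is orthogonal to the other two states. -/
theorem stmt_15 (ω0 ω1 : Fin 2) :
    ¬ ∃ a b : Q2, tens a b ≠ 0 ∧
      ip4 (![ψ0, ψ1] ω0) (tens a b) ≠ 0 ∧
      ip4 (![ψP, ψM] ω1) (tens a b) ≠ 0 ∧
      (∀ i : Fin 2, i ≠ ω0 → ip4 (![ψ0, ψ1] i) (tens a b) = 0) ∧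
      (∀ j : Fin 2, j ≠ ω1 → ip4 (![ψP, ψM] j) (tens a b) = 0) := by
  rintro ⟨a, b, -, hω0, hω1, hcomp, hhad⟩
  obtain ⟨i, hi⟩ := exists_ne ω0
  obtain ⟨j, hj⟩ := exists_ne ω1
  simp only [comp_states_eq_tens, hadamard_states_eq_tens, ip4_tens, star_ket_dotProduct]
    at hω0 hω1 hcomp hhad
  have hbi : b i = 0 := (mul_eq_zero.1 (hcomp i hi)).resolve_left (left_ne_zero_of_mul hω0)
  have hbj : star (![ketP, ketM] j) ⬝ᵥ b = 0 :=
    (mul_eq_zero.1 (hhad j hj)).resolve_left (left_ne_zero_of_mul hω1)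
  have hb := eq_zero_of_apply_eq_zero_of_star_hadamard_dotProduct_eq_zero hbi hbj
  exact right_ne_zero_of_mul hω0 (by simp [hb])
end
end
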